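/- arXiv:2506.17660 — 2 statements merged into one kernel-verified Lean document; each statement's English description precedes it below -/
import Mathlib

section
/- Fix n ≥ 1, τ_x > 0, τ_y > 0, and set γ = τ_x/(τ_x+τ_y). Let G be an n×n real matrix with nonnegative entries, zero diagonal, and row sums d_i^out = Σ_{j≠i} G i j < 1, let c = (I − γ·G)⁻¹ 𝟙, and set b_i = (1−γ)·c_i. Let ε_1, …, ε_n, ε_0 be jointly independent square-integrable real random variables with mean zero, Var(ε_i) = 1/τ_x for 1 ≤ i ≤ n and Var(ε_0) = 1/τ_y, and define X_i = (1−b_i)·ε_i + b_i·ε_0. Define ΔU_i = E[−(1−d_i^out)·X_i² − Σ_{j≠i} G i j·(X_i − X_j)²] + τ_x⁻¹(1 + d_i^out). Then for each agent i: ΔU_i < 0 if and only if c_i² < Σ_{j≠i} G i j · c_j·(c_j − 2). -/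
open Matrix Finset MeasureTheory ProbabilityTheory

/-!
The noises are independent and centred, so every second moment in the payoff is a sum of
squared loadings times variances, and `ΔU_i` becomes a quadratic expression in `b`. In it the
out-degree terms cancel, and substituting `b = (1 - γ) c`, the Katz–Bonacich fixed-point
equation `c_i = 1 + γ Σ_j g_ij c_j` and `τ_y⁻¹ (1 - γ) = τ_x⁻¹ γ` collapses it to
`ΔU_i = (1 - γ) τ_x⁻¹ (c_i² - Σ_j g_ij c_j (c_j - 2))`. The inverse defining `c` exists because
`I - γ G` is strictly diagonally dominant.
-/

section SecondMoments

variable {Ω ι : Type*} [MeasurableSpace Ω] {μ : Measure Ω} [IsFiniteMeasure μ]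
  {ε : ι → Ω → ℝ}

theorem integral_sq_sum_mul_of_iIndepFun (hindep : iIndepFun ε μ) (hL2 : ∀ k, MemLp (ε k) 2 μ)
    (hmean : ∀ k, ∫ ω, ε k ω ∂μ = 0) (s : Finset ι) (a : ι → ℝ) :
    ∫ ω, (∑ k ∈ s, a k * ε k ω) ^ 2 ∂μ = ∑ k ∈ s, a k ^ 2 * variance (ε k) μ := by
  set Y : ι → Ω → ℝ := fun k ω ↦ a k * ε k ω
  have hY : ∀ k ∈ s, MemLp (Y k) 2 μ := fun k _ ↦ (hL2 k).const_mul _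
  have hmean_sum : ∫ ω, (∑ k ∈ s, Y k) ω ∂μ = 0 := by
    simp_rw [Finset.sum_apply]
    rw [integral_finsetSum _ fun k hk ↦ (hY k hk).integrable one_le_two]
    simp [Y, integral_const_mul, hmean]
  have hpair : Set.Pairwise ↑s fun k l ↦ Y k ⟂ᵢ[μ] Y l :=
    fun k _ l _ hkl ↦ (hindep.comp (fun k x ↦ a k * x) fun k ↦ measurable_const_mul _).indepFun hkl
  calc ∫ ω, (∑ k ∈ s, a k * ε k ω) ^ 2 ∂μ = variance (∑ k ∈ s, Y k) μ := by
        rw [variance_of_integral_eq_zero (memLp_finsetSum' s hY).aemeasurable hmean_sum]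
        simp [Y, Finset.sum_apply]
    _ = ∑ k ∈ s, a k ^ 2 * variance (ε k) μ := by
        rw [IndepFun.variance_sum hY hpair]
        exact Finset.sum_congr rfl fun k _ ↦ variance_const_mul _ _ _

variable {ε : Option ι → Ω → ℝ} (hindep : iIndepFun ε μ) (hL2 : ∀ k, MemLp (ε k) 2 μ)
  (hmean : ∀ k, ∫ ω, ε k ω ∂μ = 0)
include hindep hL2 hmean

theorem integral_sq_mul_add_mul_none (i : ι) (p q : ℝ) :
    ∫ ω, (p * ε (some i) ω + q * ε none ω) ^ 2 ∂μ
      = p ^ 2 * variance (ε (some i)) μ + q ^ 2 * variance (ε none) μ := by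
  classical
  simpa using integral_sq_sum_mul_of_iIndepFun hindep hL2 hmean {some i, none}
    fun k ↦ k.elim q fun _ ↦ p

theorem integral_sq_sub_mul_add_mul_none {i j : ι} (hij : i ≠ j) (p q r s : ℝ) :
    ∫ ω, (p * ε (some i) ω + q * ε none ω - (r * ε (some j) ω + s * ε none ω)) ^ 2 ∂μ
      = p ^ 2 * variance (ε (some i)) μ + r ^ 2 * variance (ε (some j)) μ
        + (q - s) ^ 2 * variance (ε none) μ := by
  classical
  have h := integral_sq_sum_mul_of_iIndepFun hindep hL2 hmean {some i, some j, none}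
    fun k ↦ k.elim (q - s) fun l ↦ if l = i then p else -r
  simp only [Finset.mem_insert, Finset.mem_singleton, Option.some.injEq, hij, reduceCtorEq,
    or_self, not_false_eq_true, Finset.sum_insert, Finset.sum_singleton, Option.elim_some,
    Option.elim_none, if_pos, if_neg hij.symm] at h
  convert h using 1
  · exact integral_congr_ae (.of_forall fun ω ↦ by ring)
  · ring

theorem integral_payoff_eq {b : ι → ℝ} {X : ι → Ω → ℝ}
    (hX : ∀ i ω, X i ω = (1 - b i) * ε (some i) ω + b i * ε none ω) {σx σ0 : ℝ}
    (hvarx : ∀ i, variance (ε (some i)) μ = σx) (hvar0 : variance (ε none) μ = σ0)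
    (a : ℝ) (g : ι → ℝ) {s : Finset ι} {i : ι} (hi : i ∉ s) :
    ∫ ω, (a * X i ω ^ 2 - ∑ j ∈ s, g j * (X i ω - X j ω) ^ 2) ∂μ
      = a * ((1 - b i) ^ 2 * σx + b i ^ 2 * σ0)
        - ∑ j ∈ s, g j * (((1 - b i) ^ 2 + (1 - b j) ^ 2) * σx + (b i - b j) ^ 2 * σ0) := by
  have hXL2 : ∀ k, MemLp (X k) 2 μ := fun k ↦ by
    rw [show X k = _ from funext (hX k)]
    exact ((hL2 _).const_mul _).add ((hL2 _).const_mul _)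
  have hdiff : ∀ j ∈ s, ∫ ω, (X i ω - X j ω) ^ 2 ∂μ
      = ((1 - b i) ^ 2 + (1 - b j) ^ 2) * σx + (b i - b j) ^ 2 * σ0 := fun j hj ↦ by
    simp only [hX]
    rw [integral_sq_sub_mul_add_mul_none hindep hL2 hmean (ne_of_mem_of_not_mem hj hi).symm,
      hvarx, hvarx, hvar0]
    ring
  have hsq : ∫ ω, X i ω ^ 2 ∂μ = (1 - b i) ^ 2 * σx + b i ^ 2 * σ0 := by
    simp only [hX]
    rw [integral_sq_mul_add_mul_none hindep hL2 hmean, hvarx, hvar0]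
  have hint : ∀ j, Integrable (fun ω ↦ g j * (X i ω - X j ω) ^ 2) μ :=
    fun j ↦ ((hXL2 i).sub (hXL2 j)).integrable_sq.const_mul _
  rw [integral_sub ((hXL2 i).integrable_sq.const_mul _) (integrable_finsetSum _ fun j _ ↦ hint j),
    integral_finsetSum _ fun j _ ↦ hint j, integral_const_mul, hsq]
  congr 1
  exact Finset.sum_congr rfl fun j hj ↦ by rw [integral_const_mul, hdiff j hj]

end SecondMoments

theorem det_one_sub_smul_ne_zero {n : Type*} [Fintype n] [DecidableEq n] {G : Matrix n n ℝ}
    {γ : ℝ} (hγ : |γ| ≤ 1) (hdiag : ∀ i, G i i = 0)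
    (hrow : ∀ i, ∑ j ∈ univ.erase i, |G i j| < 1) :
    (1 - γ • G).det ≠ 0 := by
  refine det_ne_zero_of_sum_row_lt_diag fun i ↦ ?_
  calc ∑ j ∈ univ.erase i, ‖(1 - γ • G) i j‖ = |γ| * ∑ j ∈ univ.erase i, |G i j| := by
        rw [Finset.mul_sum]
        refine Finset.sum_congr rfl fun j hj ↦ ?_
        simp [one_apply_ne (ne_of_mem_erase hj).symm]
    _ ≤ ∑ j ∈ univ.erase i, |G i j| :=
        mul_le_of_le_one_left (sum_nonneg fun _ _ ↦ abs_nonneg _) hγ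
    _ < ‖(1 - γ • G) i i‖ := by simpa [hdiag] using hrow i

theorem katzBonacich_eq_one_add {n : Type*} [Fintype n] [DecidableEq n] {G : Matrix n n ℝ}
    {γ : ℝ} (hdet : (1 - γ • G).det ≠ 0) {c : n → ℝ} (hc : c = (1 - γ • G)⁻¹ *ᵥ fun _ ↦ 1)
    (i : n) : c i = 1 + γ * ∑ j, G i j * c j := by
  have h : (1 - γ • G) *ᵥ c = fun _ ↦ 1 := by
    rw [hc, mulVec_mulVec, mul_nonsing_inv _ (Ne.isUnit hdet), one_mulVec]
  rw [sub_mulVec, one_mulVec, smul_mulVec] at h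
  have hi := congrFun h i
  simp only [Pi.sub_apply, Pi.smul_apply, smul_eq_mul, mulVec, dotProduct] at hi
  linarith

theorem payoff_change_eq {ι : Type*} (s : Finset ι) (g b c : ι → ℝ) (i : ι) {γ σx σ0 : ℝ}
    (hb : ∀ j, b j = (1 - γ) * c j) (hσ : σ0 * (1 - γ) = σx * γ)
    (hc : c i = 1 + γ * ∑ j ∈ s, g j * c j) :
    -(1 - ∑ j ∈ s, g j) * ((1 - b i) ^ 2 * σx + b i ^ 2 * σ0)
        - ∑ j ∈ s, g j * (((1 - b i) ^ 2 + (1 - b j) ^ 2) * σx + (b i - b j) ^ 2 * σ0)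
        + σx * (1 + ∑ j ∈ s, g j)
      = (1 - γ) * σx * (c i ^ 2 - ∑ j ∈ s, g j * (c j * (c j - 2))) := by
  set d := ∑ j ∈ s, g j
  set S₁ := ∑ j ∈ s, g j * c j
  set S₂ := ∑ j ∈ s, g j * c j ^ 2
  have hsum : ∑ j ∈ s, g j * (((1 - b i) ^ 2 + (1 - b j) ^ 2) * σx + (b i - b j) ^ 2 * σ0)
      = ((1 - b i) ^ 2 * σx + σx + b i ^ 2 * σ0) * d
        - 2 * (1 - γ) * (σx + b i * σ0) * S₁ + (1 - γ) ^ 2 * (σx + σ0) * S₂ := by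
    simp only [d, S₁, S₂, Finset.mul_sum, ← Finset.sum_sub_distrib, ← Finset.sum_add_distrib]
    refine Finset.sum_congr rfl fun j _ ↦ ?_
    rw [hb j]
    ring
  have hweighted : ∑ j ∈ s, g j * (c j * (c j - 2)) = S₂ - 2 * S₁ := by
    simp only [S₁, S₂, Finset.mul_sum, ← Finset.sum_sub_distrib]
    exact Finset.sum_congr rfl fun j _ ↦ by ring
  rw [hsum, hweighted, hb i]
  linear_combination (1 - γ) * (2 * c i * S₁ - c i ^ 2 - S₂) * hσ - 2 * (1 - γ) * σx * c i * hc

theorem stmt5_general (n : ℕ) (τx τy : ℝ) (hτx : 0 < τx) (hτy : 0 < τy)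
    (γ : ℝ) (hγ : γ = τx / (τx + τy))
    (G : Matrix (Fin n) (Fin n) ℝ)
    (hposG : ∀ i j, 0 ≤ G i j) (hdiag : ∀ i, G i i = 0)
    (hrow : ∀ i, ∑ j ∈ Finset.univ.erase i, G i j < 1)
    (c : Fin n → ℝ) (hc : c = (1 - γ • G)⁻¹ *ᵥ fun _ => 1)
    (b : Fin n → ℝ) (hb : ∀ i, b i = (1 - γ) * c i)
    {Ω : Type*} [MeasurableSpace Ω] (μ : Measure Ω) [IsProbabilityMeasure μ]
    (ε : Option (Fin n) → Ω → ℝ)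
    (hindep : iIndepFun ε μ)
    (hL2 : ∀ k, MemLp (ε k) 2 μ)
    (hmean : ∀ k, ∫ ω, ε k ω ∂μ = 0)
    (hvarx : ∀ i : Fin n, variance (ε (some i)) μ = 1 / τx)
    (hvary : variance (ε none) μ = 1 / τy)
    (X : Fin n → Ω → ℝ)
    (hX : ∀ i ω, X i ω = (1 - b i) * ε (some i) ω + b i * ε none ω)
    (ΔU : Fin n → ℝ)
    (hΔU : ∀ i, ΔU i = (∫ ω, (-(1 - ∑ j ∈ Finset.univ.erase i, G i j) * (X i ω) ^ 2
          - ∑ j ∈ Finset.univ.erase i, G i j * (X i ω - X j ω) ^ 2) ∂μ)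
        + τx⁻¹ * (1 + ∑ j ∈ Finset.univ.erase i, G i j)) :
    ∀ i, ΔU i < 0 ↔
      (c i) ^ 2 < ∑ j ∈ Finset.univ.erase i, G i j * (c j * (c j - 2)) := by
  have hγ₀ : 0 ≤ γ := by rw [hγ]; positivity
  have hγ₁ : γ < 1 := by rw [hγ, div_lt_one (by positivity)]; linarith
  have hdet : (1 - γ • G).det ≠ 0 :=
    det_one_sub_smul_ne_zero (abs_le.mpr ⟨by linarith, hγ₁.le⟩) hdiag
      fun i ↦ (sum_congr rfl fun j _ ↦ abs_of_nonneg (hposG i j)).trans_lt (hrow i)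
  have hσ : 1 / τy * (1 - γ) = 1 / τx * γ := by rw [hγ]; field_simp; ring
  intro i
  have hKB : c i = 1 + γ * ∑ j ∈ univ.erase i, G i j * c j := by
    rw [sum_erase _ (by rw [hdiag, zero_mul])]
    exact katzBonacich_eq_one_add hdet hc i
  have hΔU_eq : ΔU i
      = (1 - γ) * (1 / τx) * (c i ^ 2 - ∑ j ∈ univ.erase i, G i j * (c j * (c j - 2))) := by
    rw [hΔU i, integral_payoff_eq hindep hL2 hmean hX hvarx hvary _ _ (notMem_erase i univ),
      inv_eq_one_div]
    exact payoff_change_eq _ _ _ _ i hb hσ hKB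
  have hscale : 0 < (1 - γ) * (1 / τx) := by have := sub_pos.mpr hγ₁; positivity
  rw [hΔU_eq]
  exact (smul_neg_iff_of_pos_left hscale).trans sub_neg

/-- Public information provision lowers agent `i`'s equilibrium payoff
(`ΔU_i < 0`) if and only if `c_i² < Σ_{j≠i} g_ij c_j (c_j - 2)`. -/
theorem stmt5 (n : ℕ) (hn : 1 ≤ n) (τx τy : ℝ) (hτx : 0 < τx) (hτy : 0 < τy)
    (γ : ℝ) (hγ : γ = τx / (τx + τy))
    (G : Matrix (Fin n) (Fin n) ℝ)
    (hposG : ∀ i j, 0 ≤ G i j) (hdiag : ∀ i, G i i = 0)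
    (hrow : ∀ i, ∑ j ∈ Finset.univ.erase i, G i j < 1)
    (c : Fin n → ℝ) (hc : c = (1 - γ • G)⁻¹ *ᵥ fun _ => 1)
    (b : Fin n → ℝ) (hb : ∀ i, b i = (1 - γ) * c i)
    {Ω : Type*} [MeasurableSpace Ω] (μ : Measure Ω) [IsProbabilityMeasure μ]
    (ε : Option (Fin n) → Ω → ℝ)
    (hindep : iIndepFun ε μ)
    (hL2 : ∀ k, MemLp (ε k) 2 μ)
    (hmean : ∀ k, ∫ ω, ε k ω ∂μ = 0)
    (hvarx : ∀ i : Fin n, variance (ε (some i)) μ = 1 / τx)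
    (hvary : variance (ε none) μ = 1 / τy)
    (X : Fin n → Ω → ℝ)
    (hX : ∀ i ω, X i ω = (1 - b i) * ε (some i) ω + b i * ε none ω)
    (ΔU : Fin n → ℝ)
    (hΔU : ∀ i, ΔU i = (∫ ω, (-(1 - ∑ j ∈ Finset.univ.erase i, G i j) * (X i ω) ^ 2
          - ∑ j ∈ Finset.univ.erase i, G i j * (X i ω - X j ω) ^ 2) ∂μ)
        + τx⁻¹ * (1 + ∑ j ∈ Finset.univ.erase i, G i j)) :
    ∀ i, ΔU i < 0 ↔
      (c i) ^ 2 < ∑ j ∈ Finset.univ.erase i, G i j * (c j * (c j - 2)) :=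
  stmt5_general n τx τy hτx hτy γ hγ G hposG hdiag hrow c hc b hb μ ε hindep hL2 hmean hvarx hvary X
    hX ΔU hΔU
end

section
/- Fix n ≥ 1, τ_x > 0, τ_y > 0, and set γ = τ_x/(τ_x+τ_y). Let G be an n×n real matrix with nonnegative entries, zero diagonal, and row sums d_i^out = Σ_{j≠i} G i j < 1, let c = (I − γ·G)⁻¹ 𝟙, set b_i = (1−γ)·c_i, and let d_1^in = Σ_{j≠1} G j 1. Let ε_1, …, ε_n, ε_0 be jointly independent square-integrable real random variables with mean zero, Var(ε_i) = 1/τ_x for 1 ≤ i ≤ n and Var(ε_0) = 1/τ_y. Define X_i = (1−b_i)·ε_i + b_i·ε_0 for all i, and define X†_1 = γ·ε_1 + (1−γ)·ε_0 and X†_i = ε_i for i ≠ 1. Write u_i(Z) = −(1−d_i^out)·Z_i² − Σ_{j≠i} G i j·(Z_i − Z_j)². Then [ E[u_1(X)] < E[u_1(X†)] and Σ_i E[u_i(X†)] < Σ_i E[u_i(X)] ] holds if and only if both c_1² − Σ_{j≠1} G 1 j · c_j·(c_j − 2) < 1 and 1 + d_1^in < Σ_{i=1}^{n} c_i·( (1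 − d_i^in)·c_i + 2·d_i^in ), where d_i^in = Σ_{j≠i} G j i. -/
/-!
Both profiles load each agent's action on her private noise `εᵢ` and on the common noise `ε₀`,
so by independence an expected payoff is a quadratic form in the loadings. For
`γ = τx / (τx + τy)` one has `γ / τx = (1 - γ) / τy = 1 / (τx + τy)`, and together with the
Katz–Bonacich fixed point `c = 𝟙 + γ G c` every payoff becomes `-(1 + dᵢᵒᵘᵗ) / τx` plus
`(1 - γ) / τx` times a polynomial in `c` and `G`. Agent 1's gain from withholding and the
aggregate welfare loss are thus `(1 - γ) / τx > 0` times the two differences in the statement.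
-/

open Matrix Finset MeasureTheory ProbabilityTheory

section Moments

variable {ι Ω : Type*} [MeasurableSpace Ω] {μ : Measure Ω} {ε : ι → Ω → ℝ}

theorem integral_mul_eq_ite_variance [DecidableEq ι]
    (hindep : Pairwise fun k l => IndepFun (ε k) (ε l) μ) (hL2 : ∀ k, MemLp (ε k) 2 μ)
    (hmean : ∀ k, ∫ ω, ε k ω ∂μ = 0) (k l : ι) :
    ∫ ω, ε k ω * ε l ω ∂μ = if k = l then variance (ε k) μ else 0 := by
  split_ifs with hkl
  · subst hkl
    simp only [variance_of_integral_eq_zero (hL2 k).aemeasurable (hmean k), sq]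
  · simpa [hmean] using (hindep hkl).integral_mul_eq_mul_integral (hL2 k).1 (hL2 l).1

end Moments

section TwoFactor

variable {ι Ω : Type*} [MeasurableSpace Ω] {μ : Measure Ω} {ε : Option ι → Ω → ℝ}

def twoFactorProfile (ε : Option ι → Ω → ℝ) (α β : ι → ℝ) : ι → Ω → ℝ :=
  fun i ω => α i * ε (some i) ω + β i * ε none ω

theorem memLp_twoFactorProfile (hL2 : ∀ k, MemLp (ε k) 2 μ) (α β : ι → ℝ) (i : ι) :
    MemLp (twoFactorProfile ε α β i) 2 μ :=
  ((hL2 _).const_mul _).add ((hL2 _).const_mul _)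

theorem integral_twoFactorProfile_mul [DecidableEq ι]
    (hindep : Pairwise fun k l => IndepFun (ε k) (ε l) μ) (hL2 : ∀ k, MemLp (ε k) 2 μ)
    (hmean : ∀ k, ∫ ω, ε k ω ∂μ = 0) (α β : ι → ℝ) (i j : ι) :
    ∫ ω, twoFactorProfile ε α β i ω * twoFactorProfile ε α β j ω ∂μ
      = (if i = j then α i ^ 2 * variance (ε (some i)) μ else 0)
        + β i * β j * variance (ε none) μ := by
  have hscaled : ∀ k l (a : ℝ), Integrable (fun ω => a * (ε k ω * ε l ω)) μ :=
    fun k l a => ((hL2 k).integrable_mul (hL2 l)).const_mul a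
  have hexpand : (fun ω => twoFactorProfile ε α β i ω * twoFactorProfile ε α β j ω)
      = fun ω => α i * α j * (ε (some i) ω * ε (some j) ω)
        + α i * β j * (ε (some i) ω * ε none ω) + β i * α j * (ε none ω * ε (some j) ω)
        + β i * β j * (ε none ω * ε none ω) := by
    ext ω; simp only [twoFactorProfile]; ring
  rw [hexpand, integral_add (by fun_prop) (hscaled _ _ _),
    integral_add (by fun_prop) (hscaled _ _ _), integral_add (hscaled _ _ _) (hscaled _ _ _)]
  simp only [integral_const_mul, integral_mul_eq_ite_variance hindep hL2 hmean,
    Option.some_inj, reduceCtorEq, if_false, if_true]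
  split_ifs with hij
  · subst hij
    ring
  · ring

end TwoFactor

section Payoff

variable {ι Ω : Type*} [Fintype ι] [DecidableEq ι] [MeasurableSpace Ω] {μ : Measure Ω}

noncomputable def expectedPayoff (G : Matrix ι ι ℝ) (μ : Measure Ω) (Z : ι → Ω → ℝ) (i : ι) :
    ℝ :=
  ∫ ω, (-(1 - ∑ j ∈ univ.erase i, G i j) * (Z i ω) ^ 2
    - ∑ j ∈ univ.erase i, G i j * (Z i ω - Z j ω) ^ 2) ∂μ

theorem expectedPayoff_eq_secondMoments (G : Matrix ι ι ℝ) {Z : ι → Ω → ℝ}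
    (hZ : ∀ j, MemLp (Z j) 2 μ) (i : ι) :
    expectedPayoff G μ Z i = -∫ ω, Z i ω * Z i ω ∂μ
      - ∑ j ∈ univ.erase i, G i j * (∫ ω, Z j ω * Z j ω ∂μ - 2 * ∫ ω, Z i ω * Z j ω ∂μ) := by
  have hint : ∀ j k, Integrable (fun ω => Z j ω * Z k ω) μ :=
    fun j k => (hZ j).integrable_mul (hZ k)
  have hpoint : ∀ ω, -(1 - ∑ j ∈ univ.erase i, G i j) * (Z i ω) ^ 2
      - ∑ j ∈ univ.erase i, G i j * (Z i ω - Z j ω) ^ 2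
      = -(Z i ω * Z i ω)
        - ∑ j ∈ univ.erase i, G i j * (Z j ω * Z j ω - 2 * (Z i ω * Z j ω)) := by
    intro ω
    have hsplit : ∑ j ∈ univ.erase i, G i j * (Z i ω - Z j ω) ^ 2
        = (∑ j ∈ univ.erase i, G i j) * Z i ω ^ 2
          + ∑ j ∈ univ.erase i, G i j * (Z j ω * Z j ω - 2 * (Z i ω * Z j ω)) := by
      rw [sum_mul, ← sum_add_distrib]
      exact sum_congr rfl fun j _ => by ring
    rw [hsplit]
    ring
  have hsq : Integrable (fun ω => -(Z i ω * Z i ω)) μ := (hint i i).neg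
  have hlink : ∀ j, Integrable (fun ω => G i j * (Z j ω * Z j ω - 2 * (Z i ω * Z j ω))) μ :=
    fun j => ((hint j j).sub ((hint i j).const_mul 2)).const_mul _
  simp only [expectedPayoff, hpoint]
  rw [integral_sub hsq (integrable_finsetSum _ fun j _ => hlink j), integral_neg,
    integral_finsetSum _ fun j _ => hlink j]
  simp only [integral_const_mul, integral_sub (hint _ _) ((hint _ _).const_mul 2)]

def twoFactorPayoff (G : Matrix ι ι ℝ) (vx vy : ℝ) (α β : ι → ℝ) (i : ι) : ℝ :=
  -(α i ^ 2 * vx + β i ^ 2 * vy) - ∑ j, G i j * (α j ^ 2 * vx + β j ^ 2 * vy)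
    + 2 * vy * β i * ∑ j, G i j * β j

theorem expectedPayoff_twoFactorProfile {G : Matrix ι ι ℝ} (hdiag : ∀ i, G i i = 0)
    {ε : Option ι → Ω → ℝ} (hindep : Pairwise fun k l => IndepFun (ε k) (ε l) μ)
    (hL2 : ∀ k, MemLp (ε k) 2 μ) (hmean : ∀ k, ∫ ω, ε k ω ∂μ = 0) {vx vy : ℝ}
    (hvx : ∀ i, variance (ε (some i)) μ = vx) (hvy : variance (ε none) μ = vy)
    (α β : ι → ℝ) (i : ι) :
    expectedPayoff G μ (twoFactorProfile ε α β) i = twoFactorPayoff G vx vy α β i := by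
  rw [expectedPayoff_eq_secondMoments G (memLp_twoFactorProfile hL2 α β)]
  simp only [integral_twoFactorProfile_mul hindep hL2 hmean, hvx, hvy, if_true]
  have hoff : ∀ j ∈ univ.erase i, G i j * ((α j ^ 2 * vx + β j * β j * vy)
      - 2 * ((if i = j then α i ^ 2 * vx else 0) + β i * β j * vy))
      = G i j * (α j ^ 2 * vx + β j ^ 2 * vy) - 2 * vy * β i * (G i j * β j) := by
    intro j hj
    rw [if_neg (ne_of_mem_erase hj).symm]
    ring
  rw [sum_congr rfl hoff, sum_sub_distrib, ← mul_sum,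
    sum_erase _ (by rw [hdiag]; ring), sum_erase _ (by rw [hdiag]; ring), twoFactorPayoff]
  ring

end Payoff

section Centrality

variable {ι : Type*} [Fintype ι] [DecidableEq ι] {G : Matrix ι ι ℝ} {γ : ℝ}

theorem isUnit_det_one_sub_smul (hpos : ∀ i j, 0 ≤ G i j) (hdiag : ∀ i, G i i = 0)
    (hrow : ∀ i, ∑ j ∈ univ.erase i, G i j < 1) (hγ0 : 0 ≤ γ) (hγ1 : γ ≤ 1) :
    IsUnit (1 - γ • G).det := by
  refine isUnit_iff_ne_zero.mpr (det_ne_zero_of_sum_row_lt_diag fun k => ?_)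
  have hoff : ∀ j ∈ univ.erase k, ‖(1 - γ • G) k j‖ = γ * G k j := by
    intro j hj
    rw [Matrix.sub_apply, Matrix.smul_apply, one_apply_ne' (ne_of_mem_erase hj), smul_eq_mul,
      zero_sub, norm_neg, Real.norm_of_nonneg (mul_nonneg hγ0 (hpos k j))]
  rw [sum_congr rfl hoff, ← mul_sum, Matrix.sub_apply, Matrix.smul_apply, one_apply_eq, hdiag,
    smul_zero, sub_zero, norm_one]
  calc γ * ∑ j ∈ univ.erase k, G k j ≤ ∑ j ∈ univ.erase k, G k j :=
        mul_le_of_le_one_left (sum_nonneg fun j _ => hpos k j) hγ1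
    _ < 1 := hrow k

theorem katz_eq_one_add (hdet : IsUnit (1 - γ • G).det) {c : ι → ℝ}
    (hc : c = (1 - γ • G)⁻¹ *ᵥ fun _ => 1) (i : ι) :
    c i = 1 + γ * ∑ j, G i j * c j := by
  have hfix : (1 - γ • G) *ᵥ c = fun _ => 1 := by
    rw [hc, mulVec_mulVec, mul_nonsing_inv _ hdet, one_mulVec]
  rw [sub_mulVec, one_mulVec, smul_mulVec] at hfix
  have hi := congrFun hfix i
  simp only [Pi.sub_apply, Pi.smul_apply, smul_eq_mul, mulVec, dotProduct] at hi
  linarith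

end Centrality

section Profiles

variable {ι : Type*} [Fintype ι] {G : Matrix ι ι ℝ} {γ τx τy : ℝ}

theorem twoFactorPayoff_public (hτx : 0 < τx) (hτy : 0 < τy) (hγ : γ = τx / (τx + τy))
    {c : ι → ℝ} (hcent : ∀ i, c i = 1 + γ * ∑ j, G i j * c j) (i : ι) :
    twoFactorPayoff G (1 / τx) (1 / τy) (fun j => 1 - (1 - γ) * c j) (fun j => (1 - γ) * c j) i
      = -(1 + ∑ j, G i j) / τx + (1 - γ) / τx * (c i ^ 2 - ∑ j, G i j * (c j * (c j - 2))) := by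
  have hvar : ∀ x : ℝ, (1 - (1 - γ) * x) ^ 2 * (1 / τx) + ((1 - γ) * x) ^ 2 * (1 / τy)
      = 1 / τx + (1 - γ) / τx * (x * (x - 2)) := by
    intro x
    subst hγ
    field_simp
    ring
  have hspread : ∑ j, G i j * (1 / τx + (1 - γ) / τx * (c j * (c j - 2)))
      = (∑ j, G i j) / τx + (1 - γ) / τx * ∑ j, G i j * (c j * (c j - 2)) := by
    rw [sum_div, mul_sum, ← sum_add_distrib]
    exact sum_congr rfl fun j _ => by ring
  have hcross : ∑ j, G i j * ((1 - γ) * c j) = (1 - γ) * ∑ j, G i j * c j := by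
    rw [mul_sum]
    exact sum_congr rfl fun j _ => by ring
  simp only [twoFactorPayoff, hvar, hspread, hcross]
  rw [hcent i]
  subst hγ
  field_simp
  ring

theorem twoFactorPayoff_private [DecidableEq ι] (hτx : 0 < τx) (hτy : 0 < τy)
    (hγ : γ = τx / (τx + τy)) (hdiag : ∀ i, G i i = 0) (e i : ι) :
    twoFactorPayoff G (1 / τx) (1 / τy) (Function.update 1 e γ) (Pi.single e (1 - γ)) i
      = -(1 + ∑ j, G i j) / τx + (1 - γ) / τx * ((Pi.single e 1 : ι → ℝ) i + G i e) := by
  have hvar : ∀ j, Function.update (1 : ι → ℝ) e γ j ^ 2 * (1 / τx)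
        + (Pi.single e (1 - γ) : ι → ℝ) j ^ 2 * (1 / τy)
      = 1 / τx - (1 - γ) / τx * (Pi.single e 1 : ι → ℝ) j := by
    intro j
    rcases eq_or_ne j e with rfl | hj
    · simp only [Function.update_self, Pi.single_eq_same]
      subst hγ
      field_simp
      ring
    · simp [hj]
  have hspread : ∑ j, G i j * (1 / τx - (1 - γ) / τx * (Pi.single e 1 : ι → ℝ) j)
      = (∑ j, G i j) / τx - (1 - γ) / τx * G i e := by
    simp only [mul_sub, sum_sub_distrib, mul_one_div, sum_div, Pi.single_apply, mul_ite, mul_one,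
      mul_zero, sum_ite_eq', mem_univ, if_true, mul_comm (G i e)]
  have hcross :
      (Pi.single e (1 - γ) : ι → ℝ) i * ∑ j, G i j * (Pi.single e (1 - γ) : ι → ℝ) j = 0 := by
    rcases eq_or_ne i e with rfl | hi
    · simp [Pi.single_apply, hdiag]
    · simp [hi]
  simp only [twoFactorPayoff, hvar, hspread]
  rw [mul_assoc _ ((Pi.single e (1 - γ) : ι → ℝ) i), hcross]
  ring

end Profiles

section Welfare

variable {ι : Type*} [Fintype ι] {G : Matrix ι ι ℝ} {γ τx τy : ℝ} {din : ι → ℝ}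

theorem sum_twoFactorPayoff_public (hτx : 0 < τx) (hτy : 0 < τy) (hγ : γ = τx / (τx + τy))
    {c : ι → ℝ} (hcent : ∀ i, c i = 1 + γ * ∑ j, G i j * c j)
    (hdin : ∀ i, din i = ∑ j, G j i) :
    ∑ i, twoFactorPayoff G (1 / τx) (1 / τy) (fun j => 1 - (1 - γ) * c j)
        (fun j => (1 - γ) * c j) i
      = ∑ i, -(1 + ∑ j, G i j) / τx
        + (1 - γ) / τx * ∑ i, c i * ((1 - din i) * c i + 2 * din i) := by
  simp only [twoFactorPayoff_public hτx hτy hγ hcent]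
  rw [sum_add_distrib, ← mul_sum, sum_sub_distrib, sum_comm]
  simp only [← sum_mul, ← hdin]
  rw [← sum_sub_distrib]
  congr 2
  exact sum_congr rfl fun i _ => by ring

theorem sum_twoFactorPayoff_private [DecidableEq ι] (hτx : 0 < τx) (hτy : 0 < τy)
    (hγ : γ = τx / (τx + τy)) (hdiag : ∀ i, G i i = 0) (hdin : ∀ i, din i = ∑ j, G j i)
    (e : ι) :
    ∑ i, twoFactorPayoff G (1 / τx) (1 / τy) (Function.update 1 e γ) (Pi.single e (1 - γ)) i
      = ∑ i, -(1 + ∑ j, G i j) / τx + (1 - γ) / τx * (1 + din e) := by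
  simp only [twoFactorPayoff_private hτx hτy hγ hdiag]
  rw [sum_add_distrib, ← mul_sum, sum_add_distrib, sum_pi_single', hdin]
  simp

end Welfare

theorem stmt15_general (n : ℕ) (hn : 0 < n) (τx τy : ℝ) (hτx : 0 < τx) (hτy : 0 < τy)
    (γ : ℝ) (hγ : γ = τx / (τx + τy))
    (G : Matrix (Fin n) (Fin n) ℝ)
    (hposG : ∀ i j, 0 ≤ G i j) (hdiag : ∀ i, G i i = 0)
    (hrow : ∀ i, ∑ j ∈ Finset.univ.erase i, G i j < 1)
    (c : Fin n → ℝ) (hc : c = (1 - γ • G)⁻¹ *ᵥ fun _ => 1)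
    (b : Fin n → ℝ) (hb : ∀ i, b i = (1 - γ) * c i)
    (din : Fin n → ℝ) (hdin : ∀ i, din i = ∑ j ∈ Finset.univ.erase i, G j i)
    {Ω : Type*} [MeasurableSpace Ω] (μ : Measure Ω)
    (ε : Option (Fin n) → Ω → ℝ)
    (hindep : iIndepFun ε μ)
    (hL2 : ∀ k, MemLp (ε k) 2 μ)
    (hmean : ∀ k, ∫ ω, ε k ω ∂μ = 0)
    (hvarx : ∀ i : Fin n, variance (ε (some i)) μ = 1 / τx)
    (hvary : variance (ε none) μ = 1 / τy)
    (X Xd : Fin n → Ω → ℝ)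
    (hX : ∀ i ω, X i ω = (1 - b i) * ε (some i) ω + b i * ε none ω)
    (hXd1 : ∀ ω, Xd ⟨0, hn⟩ ω = γ * ε (some ⟨0, hn⟩) ω + (1 - γ) * ε none ω)
    (hXdi : ∀ i, i ≠ ⟨0, hn⟩ → ∀ ω, Xd i ω = ε (some i) ω)
    (U : (Fin n → Ω → ℝ) → Fin n → ℝ)
    (hU : ∀ Z i, U Z i = ∫ ω, (-(1 - ∑ j ∈ Finset.univ.erase i, G i j) * (Z i ω) ^ 2
        - ∑ j ∈ Finset.univ.erase i, G i j * (Z i ω - Z j ω) ^ 2) ∂μ) :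
    (U X ⟨0, hn⟩ < U Xd ⟨0, hn⟩ ∧ ∑ i, U Xd i < ∑ i, U X i) ↔
      ((c ⟨0, hn⟩) ^ 2
          - ∑ j ∈ Finset.univ.erase ⟨0, hn⟩, G ⟨0, hn⟩ j * (c j * (c j - 2)) < 1 ∧
        1 + din ⟨0, hn⟩ < ∑ i, c i * ((1 - din i) * c i + 2 * din i)) := by
  set e : Fin n := ⟨0, hn⟩
  have hγ0 : 0 < γ := hγ ▸ by positivity
  have hγ1 : γ < 1 := by rw [hγ, div_lt_one (by positivity)]; linarith
  have hcent := katz_eq_one_add (isUnit_det_one_sub_smul hposG hdiag hrow hγ0.le hγ1.le) hc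
  have hdin_univ : ∀ i, din i = ∑ j, G j i := fun i => (hdin i).trans (sum_erase _ (hdiag i))
  have hUeq : U = expectedPayoff G μ := funext fun Z => funext (hU Z)
  have hXpub : X = twoFactorProfile ε (fun j => 1 - (1 - γ) * c j) (fun j => (1 - γ) * c j) := by
    ext i ω
    rw [hX, hb]
    rfl
  have hXpriv : Xd = twoFactorProfile ε (Function.update 1 e γ) (Pi.single e (1 - γ)) := by
    ext i ω
    rcases eq_or_ne i e with rfl | hi
    · simp [twoFactorProfile, hXd1]
    · simp [twoFactorProfile, hXdi i hi, hi]
  have hpayoff := expectedPayoff_twoFactorProfile hdiag (fun k l hkl => hindep.indepFun hkl)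
    hL2 hmean hvarx hvary
  have hgain : U Xd e - U X e = (1 - γ) / τx
      * (1 - (c e ^ 2 - ∑ j ∈ univ.erase e, G e j * (c j * (c j - 2)))) := by
    rw [hUeq, hXpub, hXpriv, hpayoff, hpayoff, twoFactorPayoff_public hτx hτy hγ hcent,
      twoFactorPayoff_private hτx hτy hγ hdiag, sum_erase _ (by simp [hdiag])]
    simp [hdiag]
    ring
  have hwelfare : ∑ i, U X i - ∑ i, U Xd i = (1 - γ) / τx
      * (∑ i, c i * ((1 - din i) * c i + 2 * din i) - (1 + din e)) := by
    simp only [hUeq, hXpub, hXpriv, hpayoff]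
    rw [sum_twoFactorPayoff_public hτx hτy hγ hcent hdin_univ,
      sum_twoFactorPayoff_private hτx hτy hγ hdiag hdin_univ]
    ring
  have hk : 0 < (1 - γ) / τx := div_pos (by linarith) hτx
  exact and_congr (by rw [← sub_pos, hgain, mul_pos_iff_of_pos_left hk, sub_pos])
    (by rw [← sub_pos, hwelfare, mul_pos_iff_of_pos_left hk, sub_pos])

/-- Agent 1 strictly prefers withholding her signal while aggregate
welfare is strictly higher with public disclosure (inefficiently low information
sharing) if and only if `c_1² - Σ_{j≠1} g_1j c_j (c_j-2) < 1` and
`1 + d_1^in < Σ_i c_i ((1-d_i^in) c_i + 2 d_i^in)`. -/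
theorem stmt15 (n : ℕ) (hn : 0 < n) (τx τy : ℝ) (hτx : 0 < τx) (hτy : 0 < τy)
    (γ : ℝ) (hγ : γ = τx / (τx + τy))
    (G : Matrix (Fin n) (Fin n) ℝ)
    (hposG : ∀ i j, 0 ≤ G i j) (hdiag : ∀ i, G i i = 0)
    (hrow : ∀ i, ∑ j ∈ Finset.univ.erase i, G i j < 1)
    (c : Fin n → ℝ) (hc : c = (1 - γ • G)⁻¹ *ᵥ fun _ => 1)
    (b : Fin n → ℝ) (hb : ∀ i, b i = (1 - γ) * c i)
    (din : Fin n → ℝ) (hdin : ∀ i, din i = ∑ j ∈ Finset.univ.erase i, G j i)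
    {Ω : Type*} [MeasurableSpace Ω] (μ : Measure Ω) [IsProbabilityMeasure μ]
    (ε : Option (Fin n) → Ω → ℝ)
    (hindep : iIndepFun ε μ)
    (hL2 : ∀ k, MemLp (ε k) 2 μ)
    (hmean : ∀ k, ∫ ω, ε k ω ∂μ = 0)
    (hvarx : ∀ i : Fin n, variance (ε (some i)) μ = 1 / τx)
    (hvary : variance (ε none) μ = 1 / τy)
    (X Xd : Fin n → Ω → ℝ)
    (hX : ∀ i ω, X i ω = (1 - b i) * ε (some i) ω + b i * ε none ω)
    (hXd1 : ∀ ω, Xd ⟨0, hn⟩ ω = γ * ε (some ⟨0, hn⟩) ω + (1 - γ) * ε none ω)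
    (hXdi : ∀ i, i ≠ ⟨0, hn⟩ → ∀ ω, Xd i ω = ε (some i) ω)
    (U : (Fin n → Ω → ℝ) → Fin n → ℝ)
    (hU : ∀ Z i, U Z i = ∫ ω, (-(1 - ∑ j ∈ Finset.univ.erase i, G i j) * (Z i ω) ^ 2
        - ∑ j ∈ Finset.univ.erase i, G i j * (Z i ω - Z j ω) ^ 2) ∂μ) :
    (U X ⟨0, hn⟩ < U Xd ⟨0, hn⟩ ∧ ∑ i, U Xd i < ∑ i, U X i) ↔
      ((c ⟨0, hn⟩) ^ 2
          - ∑ j ∈ Finset.univ.erase ⟨0, hn⟩, G ⟨0, hn⟩ j * (c j * (c j - 2)) < 1 ∧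
        1 + din ⟨0, hn⟩ < ∑ i, c i * ((1 - din i) * c i + 2 * din i)) :=
  stmt15_general n hn τx τy hτx hτy γ hγ G hposG hdiag hrow c hc b hb din hdin μ ε hindep hL2 hmean
    hvarx hvary X Xd hX hXd1 hXdi U hU
end
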